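/- Let G be a topological group acting continuously on a topological space X, H₀ and H₁ subgroups of G with H₁ compact, such that H₀ and H₁ commute elementwise. Then for any x ∈ X, the closure of (H₁·H₀)·x equals H₁ · (closure of H₀·x). -/

import Mathlib

/-!
The orbit map `g ↦ g • x` turns `(H₁ * H₀) • x` into `H₁ • (H₀ • x)`. For a compact set `K`
of group elements and a closed set `t`, `K • t` is closed (properness of the projection from
`K × X`), so `closure (K • s) = K • closure s` for every `s`; apply this with `K = H₁`.
-/

open Pointwise

theorem image_smul_const_mul {G X : Type*} [Monoid G] [MulAction G X] (s t : Set G) (x : X) :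
    (fun g : G => g • x) '' (s * t) = s • (fun g : G => g • x) '' t := by
  simp only [← Set.smul_singleton, mul_smul]

theorem IsCompact.closure_smul_eq_smul_closure {G X : Type*} [Group G] [TopologicalSpace G]
    [ContinuousInv G] [TopologicalSpace X] [MulAction G X] [ContinuousSMul G X]
    {K : Set G} (hK : IsCompact K) (s : Set X) :
    closure (K • s) = K • closure s := by
  apply le_antisymm
  · exact closure_minimal (Set.smul_subset_smul_left subset_closure)
      (isClosed_closure.smul_left_of_isCompact hK)
  · calc K • closure s ⊆ closure K • closure s := Set.smul_subset_smul_right subset_closure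
      _ ⊆ closure (K • s) := smul_set_closure_subset K s

theorem stmt7_general {G X : Type*} [Group G] [TopologicalSpace G] [IsTopologicalGroup G]
    [TopologicalSpace X] [MulAction G X]
    (hc : Continuous (fun p : G × X => p.1 • p.2))
    (H₀ H₁ : Subgroup G) (hcpt : IsCompact (H₁ : Set G))
    (x : X) :
    closure ((fun g : G => g • x) '' ((H₁ : Set G) * (H₀ : Set G))) =
      Set.image2 (fun (g : G) (y : X) => g • y) (H₁ : Set G)
        (closure ((fun g : G => g • x) '' (H₀ : Set G))) := by
  have : ContinuousSMul G X := ⟨hc⟩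
  rw [image_smul_const_mul]
  exact hcpt.closure_smul_eq_smul_closure _

/-- Let `G` be a topological group acting continuously on a topological
space `X`, and `H₀, H₁ ≤ G` subgroups with `H₁` compact, commuting elementwise.
Then for any `x ∈ X`, the closure of `(H₁·H₀)·x` equals `H₁ · (closure of H₀·x)`. -/
theorem stmt7 {G X : Type*} [Group G] [TopologicalSpace G] [IsTopologicalGroup G]
    [TopologicalSpace X] [MulAction G X]
    (hc : Continuous (fun p : G × X => p.1 • p.2))
    (H₀ H₁ : Subgroup G) (hcpt : IsCompact (H₁ : Set G))
    (hcomm : ∀ h₀ ∈ H₀, ∀ h₁ ∈ H₁, h₀ * h₁ = h₁ * h₀) (x : X) :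
    closure ((fun g : G => g • x) '' ((H₁ : Set G) * (H₀ : Set G))) =
      Set.image2 (fun (g : G) (y : X) => g • y) (H₁ : Set G)
        (closure ((fun g : G => g • x) '' (H₀ : Set G))) :=
  stmt7_general hc H₀ H₁ hcpt x
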